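/- arXiv:1909.01223 — 9 statements merged into one kernel-verified Lean document; each statement's English description precedes it below -/
import Mathlib

section
/- Let v1, v2, v3, v4 be affinely independent points of ℝ³ and let p ∈ ℝ³. Then p lies in the (topological) interior of the convex hull of {v1, v2, v3, v4} if and only if for each i ∈ {1,2,3,4}, p and v_i lie strictly on the same side of the plane through the other three points; that is, p ∈ interior (convexHull ℝ {v1,v2,v3,v4}) ↔ ∀ i, (affineSpan ℝ of the three points other than v_i).SSameSide p v_i. -/
/-!
The vertices of a nondegenerate simplex spanning the space form an affine basis, so the interior of
their convex hull is the set of points all of whose barycentric coordinates are positive. The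
`i`-th coordinate vanishes exactly on the face opposite the `i`-th vertex and equals `1` at that
vertex, so it is positive exactly on the open side of that face containing the vertex.
-/

open Set

theorem Affine.Simplex.mem_interior_convexHull_iff_forall_sSameSide {E : Type*}
    [NormedAddCommGroup E] [NormedSpace ℝ E] {n : ℕ} [NeZero n] (s : Affine.Simplex ℝ E n)
    (hs : affineSpan ℝ (range s.points) = ⊤) (x : E) :
    x ∈ interior (convexHull ℝ (range s.points)) ↔
      ∀ i, (affineSpan ℝ (range (s.faceOpposite i).points)).SSameSide x (s.points i) := by
  let b : AffineBasis (Fin (n + 1)) ℝ E := ⟨s.points, s.independent, hs⟩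
  rw [show range s.points = range b from rfl, b.interior_convexHull, mem_ofPred_eq]
  refine forall_congr' fun i => ?_
  conv_rhs => rw [← b.affineCombination_coord_eq_self x]
  exact (s.sSameSide_affineSpan_faceOpposite_point_right_iff (b.sum_coord_apply_eq_one x)).symm

/-- A point lies in the interior of the solid tetrahedron on four affinely independent
points of ℝ³ if and only if it lies strictly on the same side as each vertex of the plane
through the other three vertices. -/
theorem mem_interior_tetrahedron_iff_sSameSide
    (v₁ v₂ v₃ v₄ p : EuclideanSpace ℝ (Fin 3))
    (h : AffineIndependent ℝ ![v₁, v₂, v₃, v₄]) :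
    p ∈ interior (convexHull ℝ ({v₁, v₂, v₃, v₄} : Set (EuclideanSpace ℝ (Fin 3)))) ↔
      (affineSpan ℝ ({v₂, v₃, v₄} : Set (EuclideanSpace ℝ (Fin 3)))).SSameSide p v₁ ∧
      (affineSpan ℝ ({v₁, v₃, v₄} : Set (EuclideanSpace ℝ (Fin 3)))).SSameSide p v₂ ∧
      (affineSpan ℝ ({v₁, v₂, v₄} : Set (EuclideanSpace ℝ (Fin 3)))).SSameSide p v₃ ∧
      (affineSpan ℝ ({v₁, v₂, v₃} : Set (EuclideanSpace ℝ (Fin 3)))).SSameSide p v₄ := by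
  let s : Affine.Simplex ℝ (EuclideanSpace ℝ (Fin 3)) 3 := ⟨![v₁, v₂, v₃, v₄], h⟩
  have hrange : range s.points = {v₁, v₂, v₃, v₄} := by
    ext; simp [s]; tauto
  rw [← hrange, s.mem_interior_convexHull_iff_forall_sSameSide
    (s.span_eq_top finrank_euclideanSpace_fin)]
  simp only [Fin.forall_fin_succ, IsEmpty.forall_iff, and_true,
    Affine.Simplex.range_faceOpposite_points]
  congr!
  all_goals ext; simp [s, Fin.exists_fin_succ, eq_comm]
end

section
/- Let v1, v2, v3, v4 be affinely independent points of ℝ³. Then there is no point p ∈ ℝ³ such that for every i ∈ {1,2,3,4}, p and v_i lie strictly on opposite sides of the plane through the other three points; that is, ¬∃ p, ∀ i, (affineSpan ℝ of the three points other than v_i).SOppSide p v_i. -/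
open AffineSubspace

private lemma coord_nonpos (f : EuclideanSpace ℝ (Fin 3) →ᵃ[ℝ] ℝ)
    (s : Set (EuclideanSpace ℝ (Fin 3))) (hs : ∀ x ∈ s, f x = 0)
    {x y : EuclideanSpace ℝ (Fin 3)}
    (hxy : (affineSpan ℝ s).SOppSide x y) (hy : f y = 1) : f x ≤ 0 := by
  have hspan : ∀ p ∈ affineSpan ℝ s, f p = 0 := by
    intro p hp
    have hle : affineSpan ℝ s ≤ AffineSubspace.comap f (AffineSubspace.mk' (0:ℝ) ⊥) := by
      refine affineSpan_le.mpr ?_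
      intro z hz
      simp [AffineSubspace.mem_comap, AffineSubspace.mem_mk', hs z hz]
    have := hle hp
    simpa [AffineSubspace.mem_comap, AffineSubspace.mem_mk'] using this
  obtain ⟨p₁, hp₁, p₂, hp₂, hr⟩ := hxy.1
  have hr' : SameRay ℝ (f x - f p₁) (f p₂ - f y) := by
    have := hr.map f.linear
    rw [AffineMap.linearMap_vsub, AffineMap.linearMap_vsub] at this
    simpa [vsub_eq_sub] using this
  rw [hspan p₁ hp₁, hspan p₂ hp₂, hy, sub_zero, zero_sub] at hr'
  rcases hr' with h0 | h0 | ⟨r₁, r₂, hr₁, hr₂, heq⟩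
  · simp [h0]
  · norm_num at h0
  · have : r₁ * f x = -r₂ := by simpa using heq
    nlinarith

/-- No point of ℝ³ lies strictly on the opposite side from every vertex of a tetrahedron
of the plane through the other three vertices: a fifth point cannot lie in the outside
half-space of all four faces. -/
theorem no_point_sOppSide_all_faces
    (v₁ v₂ v₃ v₄ : EuclideanSpace ℝ (Fin 3))
    (h : AffineIndependent ℝ ![v₁, v₂, v₃, v₄]) :
    ¬∃ p : EuclideanSpace ℝ (Fin 3),
      (affineSpan ℝ ({v₂, v₃, v₄} : Set (EuclideanSpace ℝ (Fin 3)))).SOppSide p v₁ ∧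
      (affineSpan ℝ ({v₁, v₃, v₄} : Set (EuclideanSpace ℝ (Fin 3)))).SOppSide p v₂ ∧
      (affineSpan ℝ ({v₁, v₂, v₄} : Set (EuclideanSpace ℝ (Fin 3)))).SOppSide p v₃ ∧
      (affineSpan ℝ ({v₁, v₂, v₃} : Set (EuclideanSpace ℝ (Fin 3)))).SOppSide p v₄ := by
  rintro ⟨p, h1, h2, h3, h4⟩
  have htop : affineSpan ℝ (Set.range ![v₁, v₂, v₃, v₄]) = ⊤ := by
    rw [h.affineSpan_eq_top_iff_card_eq_finrank_add_one]
    simp [finrank_euclideanSpace]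
  let b : AffineBasis (Fin 4) ℝ (EuclideanSpace ℝ (Fin 3)) := ⟨![v₁, v₂, v₃, v₄], h, htop⟩
  have hb : ∀ i, b i = ![v₁, v₂, v₃, v₄] i := fun i => rfl
  have hcoord : ∀ i j : Fin 4, b.coord i (![v₁, v₂, v₃, v₄] j) = if i = j then 1 else 0 := by
    intro i j
    rw [← hb j, b.coord_apply]
  have key : ∀ i : Fin 4, b.coord i p ≤ 0 := by
    intro i
    fin_cases i
    · refine coord_nonpos (b.coord 0) _ ?_ h1 (by simpa using hcoord 0 0)
      rintro x (rfl | rfl | rfl)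
      · simpa using hcoord 0 1
      · simpa using hcoord 0 2
      · simpa using hcoord 0 3
    · refine coord_nonpos (b.coord 1) _ ?_ h2 (by simpa using hcoord 1 1)
      rintro x (rfl | rfl | rfl)
      · simpa using hcoord 1 0
      · simpa using hcoord 1 2
      · simpa using hcoord 1 3
    · refine coord_nonpos (b.coord 2) _ ?_ h3 (by simpa using hcoord 2 2)
      rintro x (rfl | rfl | rfl)
      · simpa using hcoord 2 0
      · simpa using hcoord 2 1
      · simpa using hcoord 2 3
    · refine coord_nonpos (b.coord 3) _ ?_ h4 (by simpa using hcoord 3 3)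
      rintro x (rfl | rfl | rfl)
      · simpa using hcoord 3 0
      · simpa using hcoord 3 1
      · simpa using hcoord 3 2
  have hsum := b.sum_coord_apply_eq_one p
  have : (∑ i, b.coord i p) ≤ 0 := Finset.sum_nonpos (fun i _ => key i)
  linarith
end

section
/- Let v1, v2, v3, v4 be affinely independent points of ℝ³ and let p ∈ ℝ³ satisfy: p and v1 lie strictly on opposite sides of the plane through v2, v3, v4; p and v2 lie strictly on the same side of the plane through v1, v3, v4; p and v3 lie strictly on the same side of the plane through v1, v2, v4; and p and v4 lie strictly on the same side of the plane through v1, v2, v3. Then the open segment from v1 to p meets the intrinsic interior of the triangle convexHull ℝ {v2, v3, v4}; that is, (openSegment ℝ v1 p) ∩ intrinsicInterior ℝ (convexHull ℝ {v2,v3,v4}) ≠ ∅. -/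
open AffineSubspace Set

/-- The zero set of an affine functional, as an affine subspace. -/
def kerAffine {V : Type*} [AddCommGroup V] [Module ℝ V] (f : V →ᵃ[ℝ] ℝ) :
    AffineSubspace ℝ V where
  carrier := {x | f x = 0}
  smul_vsub_vadd_mem' c {p₁ p₂ p₃} h₁ h₂ h₃ := by
    simp only [Set.mem_setOf_eq] at *
    have hv : f (c • (p₁ -ᵥ p₂) +ᵥ p₃) = c • (f p₁ -ᵥ f p₂) +ᵥ f p₃ := by
      rw [AffineMap.map_vadd, LinearMap.map_smul, AffineMap.linearMap_vsub]
    simpa [h₁, h₂, h₃] using hv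

theorem mem_kerAffine_iff {V : Type*} [AddCommGroup V] [Module ℝ V] (f : V →ᵃ[ℝ] ℝ) (x : V) :
    x ∈ kerAffine f ↔ f x = 0 := Iff.rfl

theorem sOppSide_mul_neg {V : Type*} [AddCommGroup V] [Module ℝ V]
    {s : AffineSubspace ℝ V} (f : V →ᵃ[ℝ] ℝ) (hs : ∀ z, z ∈ s ↔ f z = 0) {x y : V}
    (hxy : s.SOppSide x y) : f x * f y < 0 := by
  obtain ⟨⟨p₁, hp₁, p₂, hp₂, hray⟩, hx, hy⟩ := hxy
  have hfx : f x ≠ 0 := fun hc => hx ((hs x).mpr hc)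
  have hfy : f y ≠ 0 := fun hc => hy ((hs y).mpr hc)
  have hmap := hray.map f.linear
  rw [AffineMap.linearMap_vsub, AffineMap.linearMap_vsub, (hs p₁).mp hp₁, (hs p₂).mp hp₂] at hmap
  simp only [vsub_eq_sub, sub_zero, zero_sub] at hmap
  rcases hmap with h0 | h0 | ⟨r₁, r₂, hr₁, hr₂, hEq⟩
  · exact absurd h0 hfx
  · exact absurd (neg_eq_zero.mp h0) hfy
  · simp only [smul_eq_mul] at hEq
    have hy2 : 0 < f y * f y := mul_self_pos.mpr hfy
    have key : r₁ * (f x * f y) = -(r₂ * (f y * f y)) := by linear_combination f y * hEq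
    nlinarith [key, hy2, hr₁, hr₂]

theorem sSameSide_mul_pos {V : Type*} [AddCommGroup V] [Module ℝ V]
    {s : AffineSubspace ℝ V} (f : V →ᵃ[ℝ] ℝ) (hs : ∀ z, z ∈ s ↔ f z = 0) {x y : V}
    (hxy : s.SSameSide x y) : 0 < f x * f y := by
  obtain ⟨⟨p₁, hp₁, p₂, hp₂, hray⟩, hx, hy⟩ := hxy
  have hfx : f x ≠ 0 := fun hc => hx ((hs x).mpr hc)
  have hfy : f y ≠ 0 := fun hc => hy ((hs y).mpr hc)
  have hmap := hray.map f.linear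
  rw [AffineMap.linearMap_vsub, AffineMap.linearMap_vsub, (hs p₁).mp hp₁, (hs p₂).mp hp₂] at hmap
  simp only [vsub_eq_sub, sub_zero] at hmap
  rcases hmap with h0 | h0 | ⟨r₁, r₂, hr₁, hr₂, hEq⟩
  · exact absurd h0 hfx
  · exact absurd h0 hfy
  · simp only [smul_eq_mul] at hEq
    have hy2 : 0 < f y * f y := mul_self_pos.mpr hfy
    have key : r₁ * (f x * f y) = r₂ * (f y * f y) := by linear_combination f y * hEq
    nlinarith [key, hy2, hr₁, hr₂]

theorem mem_span_triple_iff_coord_eq_zero {V : Type*} [AddCommGroup V] [Module ℝ V]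
    (b : AffineBasis (Fin 4) ℝ V) (x : V) :
    x ∈ affineSpan ℝ ({b 1, b 2, b 3} : Set V) ↔ b.coord 0 x = 0 := by
  classical
  constructor
  · intro hx
    have hle : affineSpan ℝ ({b 1, b 2, b 3} : Set V) ≤ kerAffine (b.coord 0) := by
      refine affineSpan_le.mpr ?_
      intro y hy
      simp only [Set.mem_insert_iff, Set.mem_singleton_iff] at hy
      rcases hy with rfl | rfl | rfl <;>
        simp [mem_kerAffine_iff, AffineBasis.coord_apply]
    exact hle hx
  · intro hx
    have h1 : ∑ i, b.coord i x = 1 := b.sum_coord_apply_eq_one x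
    have hrep : x = ∑ i : Fin 4, b.coord i x • b i := by
      conv_lhs => rw [← b.affineCombination_coord_eq_self x]
      rw [Finset.univ.affineCombination_eq_linear_combination _ _ h1]
    set w : Fin 3 → ℝ := ![b.coord 1 x, b.coord 2 x, b.coord 3 x] with hw_def
    have hw : ∑ i, w i = 1 := by
      rw [Fin.sum_univ_three]
      rw [Fin.sum_univ_four] at h1
      simp only [hw_def, Matrix.cons_val_zero, Matrix.cons_val_one, Matrix.head_cons,
        Matrix.cons_val_two, Matrix.tail_cons]
      rw [hx] at h1
      linarith
    have hcomb : Finset.univ.affineCombination ℝ ![b 1, b 2, b 3] w = x := by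
      rw [Finset.univ.affineCombination_eq_linear_combination _ _ hw, Fin.sum_univ_three]
      rw [hrep, Fin.sum_univ_four, hx]
      simp [hw_def]
    have hmem := affineCombination_mem_affineSpan hw ![b 1, b 2, b 3]
    rw [hcomb] at hmem
    have hrange : Set.range ![b 1, b 2, b 3] = ({b 1, b 2, b 3} : Set V) := by
      ext z
      simp [Fin.exists_fin_succ, Matrix.range_cons, Matrix.range_empty]
      tauto
    rwa [hrange] at hmem

set_option maxHeartbeats 1000000 in
/-- Case (b) of the classification of linear embeddings of K₅: if a fifth point `p` lies
strictly outside the face ⟨v₂,v₃,v₄⟩ of the tetrahedron ⟨v₁,v₂,v₃,v₄⟩ but strictly inside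
the half-spaces of the other three faces, then the open segment from `v₁` to `p` pierces
the triangle ⟨v₂,v₃,v₄⟩ in its relative interior. -/
theorem segment_pierces_glued_face
    (v₁ v₂ v₃ v₄ p : EuclideanSpace ℝ (Fin 3))
    (h : AffineIndependent ℝ ![v₁, v₂, v₃, v₄])
    (h₁ : (affineSpan ℝ ({v₂, v₃, v₄} : Set (EuclideanSpace ℝ (Fin 3)))).SOppSide p v₁)
    (h₂ : (affineSpan ℝ ({v₁, v₃, v₄} : Set (EuclideanSpace ℝ (Fin 3)))).SSameSide p v₂)
    (h₃ : (affineSpan ℝ ({v₁, v₂, v₄} : Set (EuclideanSpace ℝ (Fin 3)))).SSameSide p v₃)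
    (h₄ : (affineSpan ℝ ({v₁, v₂, v₃} : Set (EuclideanSpace ℝ (Fin 3)))).SSameSide p v₄) :
    (openSegment ℝ v₁ p ∩
      intrinsicInterior ℝ (convexHull ℝ ({v₂, v₃, v₄} : Set (EuclideanSpace ℝ (Fin 3))))) ≠ ∅ := by
  classical
  have htop : affineSpan ℝ (Set.range ![v₁, v₂, v₃, v₄]) = ⊤ :=
    h.affineSpan_eq_top_iff_card_eq_finrank_add_one.mpr (by simp)
  set b : AffineBasis (Fin 4) ℝ (EuclideanSpace ℝ (Fin 3)) := ⟨![v₁, v₂, v₃, v₄], h, htop⟩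
    with hbdef
  have hb0 : b 0 = v₁ := rfl
  have hb1 : b 1 = v₂ := rfl
  have hb2 : b 2 = v₃ := rfl
  have hb3 : b 3 = v₄ := rfl
  -- the four planes as coordinate zero sets
  have hk₁ : ∀ z, z ∈ affineSpan ℝ ({v₂, v₃, v₄} : Set (EuclideanSpace ℝ (Fin 3))) ↔
      b.coord 0 z = 0 := by
    intro z
    have h' := mem_span_triple_iff_coord_eq_zero b z
    rwa [hb1, hb2, hb3] at h'
  let e₂ : Fin 4 ≃ Fin 4 := ⟨![1,0,2,3], ![1,0,2,3], by decide, by decide⟩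
  have hk₂ : ∀ z, z ∈ affineSpan ℝ ({v₁, v₃, v₄} : Set (EuclideanSpace ℝ (Fin 3))) ↔
      b.coord 1 z = 0 := by
    intro z
    have h' := mem_span_triple_iff_coord_eq_zero (b.reindex e₂) z
    have e1 : (b.reindex e₂) 1 = v₁ := rfl
    have ee2 : (b.reindex e₂) 2 = v₃ := rfl
    have e3 : (b.reindex e₂) 3 = v₄ := rfl
    have ec : (b.reindex e₂).coord 0 = b.coord 1 := by
      rw [AffineBasis.coord_reindex, show e₂.symm 0 = 1 by decide]
    rwa [e1, ee2, e3, ec] at h'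
  let e₃ : Fin 4 ≃ Fin 4 := ⟨![1,2,0,3], ![2,0,1,3], by decide, by decide⟩
  have hk₃ : ∀ z, z ∈ affineSpan ℝ ({v₁, v₂, v₄} : Set (EuclideanSpace ℝ (Fin 3))) ↔
      b.coord 2 z = 0 := by
    intro z
    have h' := mem_span_triple_iff_coord_eq_zero (b.reindex e₃) z
    have e1 : (b.reindex e₃) 1 = v₁ := rfl
    have ee2 : (b.reindex e₃) 2 = v₂ := rfl
    have e3 : (b.reindex e₃) 3 = v₄ := rfl
    have ec : (b.reindex e₃).coord 0 = b.coord 2 := by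
      rw [AffineBasis.coord_reindex, show e₃.symm 0 = 2 by decide]
    rwa [e1, ee2, e3, ec] at h'
  let e₄ : Fin 4 ≃ Fin 4 := ⟨![1,2,3,0], ![3,0,1,2], by decide, by decide⟩
  have hk₄ : ∀ z, z ∈ affineSpan ℝ ({v₁, v₂, v₃} : Set (EuclideanSpace ℝ (Fin 3))) ↔
      b.coord 3 z = 0 := by
    intro z
    have h' := mem_span_triple_iff_coord_eq_zero (b.reindex e₄) z
    have e1 : (b.reindex e₄) 1 = v₁ := rfl
    have ee2 : (b.reindex e₄) 2 = v₂ := rfl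
    have e3 : (b.reindex e₄) 3 = v₃ := rfl
    have ec : (b.reindex e₄).coord 0 = b.coord 3 := by
      rw [AffineBasis.coord_reindex, show e₄.symm 0 = 3 by decide]
    rwa [e1, ee2, e3, ec] at h'
  -- signs of the barycentric coordinates of p
  have hc0 : b.coord 0 p < 0 := by
    have hm := sOppSide_mul_neg (b.coord 0) hk₁ h₁
    have hv : b.coord 0 v₁ = 1 := by rw [← hb0]; simp [AffineBasis.coord_apply]
    rw [hv, mul_one] at hm
    exact hm
  have hc1 : 0 < b.coord 1 p := by
    have hm := sSameSide_mul_pos (b.coord 1) hk₂ h₂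
    have hv : b.coord 1 v₂ = 1 := by rw [← hb1]; simp [AffineBasis.coord_apply]
    rw [hv, mul_one] at hm
    exact hm
  have hc2 : 0 < b.coord 2 p := by
    have hm := sSameSide_mul_pos (b.coord 2) hk₃ h₃
    have hv : b.coord 2 v₃ = 1 := by rw [← hb2]; simp [AffineBasis.coord_apply]
    rw [hv, mul_one] at hm
    exact hm
  have hc3 : 0 < b.coord 3 p := by
    have hm := sSameSide_mul_pos (b.coord 3) hk₄ h₄
    have hv : b.coord 3 v₄ = 1 := by rw [← hb3]; simp [AffineBasis.coord_apply]
    rw [hv, mul_one] at hm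
    exact hm
  have hsum : b.coord 0 p + b.coord 1 p + b.coord 2 p + b.coord 3 p = 1 := by
    have := b.sum_coord_apply_eq_one p
    rwa [Fin.sum_univ_four] at this
  have hp : p = b.coord 0 p • v₁ + b.coord 1 p • v₂ + b.coord 2 p • v₃ + b.coord 3 p • v₄ := by
    conv_lhs => rw [← b.affineCombination_coord_eq_self p]
    rw [Finset.univ.affineCombination_eq_linear_combination _ _ (b.sum_coord_apply_eq_one p),
      Fin.sum_univ_four, hb0, hb1, hb2, hb3]
  -- the piercing point
  have h1c : (0:ℝ) < 1 - b.coord 0 p := by linarith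
  obtain ⟨t, htdef⟩ : ∃ t : ℝ, t = (1 - b.coord 0 p)⁻¹ := ⟨_, rfl⟩
  have ht0 : 0 < t := htdef ▸ inv_pos.mpr h1c
  have htc : t * (1 - b.coord 0 p) = 1 := htdef ▸ inv_mul_cancel₀ (ne_of_gt h1c)
  have htc' : t - t * b.coord 0 p = 1 := by linear_combination htc
  have ht1 : t < 1 := by nlinarith [htc, ht0]
  set y : EuclideanSpace ℝ (Fin 3) := (1 - t) • v₁ + t • p with hydef
  have hyseg : y ∈ openSegment ℝ v₁ p := by
    rw [openSegment_eq_image]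
    exact ⟨t, ⟨ht0, ht1⟩, rfl⟩
  -- the triangle
  have hAI3 : AffineIndependent ℝ ![v₂, v₃, v₄] := by
    have hcomp := h.comp_embedding (⟨Fin.succ, Fin.succ_injective 3⟩ : Fin 3 ↪ Fin 4)
    have hfun : ![v₁, v₂, v₃, v₄] ∘ (⟨Fin.succ, Fin.succ_injective 3⟩ : Fin 3 ↪ Fin 4)
        = ![v₂, v₃, v₄] := by
      funext i; fin_cases i <;> rfl
    rwa [hfun] at hcomp
  have hrange3 : Set.range ![v₂, v₃, v₄] = ({v₂, v₃, v₄} : Set (EuclideanSpace ℝ (Fin 3))) := by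
    ext z
    simp [Fin.exists_fin_succ]
    tauto
  set W := vectorSpan ℝ ({v₂, v₃, v₄} : Set (EuclideanSpace ℝ (Fin 3))) with hWdef
  have hWrank : Module.finrank ℝ W = 2 := by
    have hr := hAI3.finrank_vectorSpan (by simp : Fintype.card (Fin 3) = 2 + 1)
    rwa [hrange3] at hr
  have hv32 : v₃ - v₂ ∈ W := vsub_mem_vectorSpan ℝ (by simp) (by simp)
  have hv42 : v₄ - v₂ ∈ W := vsub_mem_vectorSpan ℝ (by simp) (by simp)
  set u : Fin 3 → W := ![0, ⟨v₃ - v₂, hv32⟩, ⟨v₄ - v₂, hv42⟩] with hudef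
  set φ : W →ᵃⁱ[ℝ] EuclideanSpace ℝ (Fin 3) :=
    ((AffineIsometryEquiv.constVAdd ℝ (EuclideanSpace ℝ (Fin 3)) v₂).toAffineIsometry).comp
      W.subtypeₗᵢ.toAffineIsometry with hφdef
  have hφ : ∀ w : W, φ w = v₂ + (w : EuclideanSpace ℝ (Fin 3)) := fun w => rfl
  have hφu : ⇑φ ∘ u = ![v₂, v₃, v₄] := by
    funext i
    fin_cases i <;> simp [hφ, hudef]
  have hui : AffineIndependent ℝ u := by
    apply AffineIndependent.of_comp φ.toAffineMap
    have hco : ⇑φ.toAffineMap ∘ u = ![v₂, v₃, v₄] := by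
      rw [AffineIsometry.coe_toAffineMap]; exact hφu
    rwa [hco]
  have hutop : affineSpan ℝ (Set.range u) = ⊤ :=
    hui.affineSpan_eq_top_iff_card_eq_finrank_add_one.mpr (by simp [hWrank])
  set b' : AffineBasis (Fin 3) ℝ W := ⟨u, hui, hutop⟩ with hb'def
  set w' : Fin 3 → ℝ := ![t * b.coord 1 p, t * b.coord 2 p, t * b.coord 3 p] with hw'def
  have hw'0 : w' 0 = t * b.coord 1 p := rfl
  have hw'1 : w' 1 = t * b.coord 2 p := rfl
  have hw'2 : w' 2 = t * b.coord 3 p := rfl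
  have hsum3 : t * b.coord 1 p + t * b.coord 2 p + t * b.coord 3 p = 1 := by
    have hsub : b.coord 1 p + b.coord 2 p + b.coord 3 p = 1 - b.coord 0 p := by linarith
    calc t * b.coord 1 p + t * b.coord 2 p + t * b.coord 3 p
        = t * (b.coord 1 p + b.coord 2 p + b.coord 3 p) := by ring
      _ = 1 := by rw [hsub]; exact htc
  have hw'sum : ∑ i, w' i = 1 := by
    rw [Fin.sum_univ_three, hw'0, hw'1, hw'2]
    exact hsum3
  set z : W := Finset.univ.affineCombination ℝ u w' with hzdef
  have hz_coord : ∀ i, b'.coord i z = w' i := fun i =>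
    b'.coord_apply_combination_of_mem (Finset.mem_univ i) hw'sum
  have hz_int : z ∈ interior (convexHull ℝ (Set.range ⇑b')) := by
    rw [b'.interior_convexHull]
    intro i
    rw [hz_coord i]
    fin_cases i
    · exact mul_pos ht0 hc1
    · exact mul_pos ht0 hc2
    · exact mul_pos ht0 hc3
  have hz_intr : z ∈ intrinsicInterior ℝ (convexHull ℝ (Set.range ⇑b')) :=
    interior_subset_intrinsicInterior hz_int
  have hy_mem : φ z ∈ intrinsicInterior ℝ
      (convexHull ℝ ({v₂, v₃, v₄} : Set (EuclideanSpace ℝ (Fin 3)))) := by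
    have himg : ⇑φ '' (convexHull ℝ (Set.range ⇑b'))
        = convexHull ℝ ({v₂, v₃, v₄} : Set (EuclideanSpace ℝ (Fin 3))) := by
      have hic := φ.toAffineMap.image_convexHull (Set.range ⇑b')
      rw [AffineIsometry.coe_toAffineMap] at hic
      rw [hic]
      congr 1
      rw [show Set.range ⇑b' = Set.range u from rfl, ← Set.range_comp, hφu, hrange3]
    rw [← himg, φ.image_intrinsicInterior]
    exact ⟨z, hz_intr, rfl⟩
  have hzc : (z : EuclideanSpace ℝ (Fin 3))
      = (t * b.coord 2 p) • (v₃ - v₂) + (t * b.coord 3 p) • (v₄ - v₂) := by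
    rw [hzdef, Finset.univ.affineCombination_eq_linear_combination _ _ hw'sum,
      Fin.sum_univ_three, hw'0, hw'1, hw'2]
    simp [hudef]
  have hy' : y = v₂ + ((t * b.coord 2 p) • (v₃ - v₂) + (t * b.coord 3 p) • (v₄ - v₂)) := by
    rw [hydef]
    conv_lhs => rw [hp]
    match_scalars <;> ring_nf <;> linarith [htc', hsum3, hsum]
  have hyz : φ z = y := by
    rw [hφ, hzc]
    exact hy'.symm
  apply Set.nonempty_iff_ne_empty.mp
  exact ⟨y, hyseg, hyz ▸ hy_mem⟩
end

section
/- Let v1, v2, v3, v4, v5 be five points of ℝ³ in general position (every four of them affinely independent) satisfying: v5 and v4 lie strictly on opposite sides of the plane through v1, v2, v3; v5 and v3 lie strictly on opposite sides of the plane through v1, v2, v4; v5 and v2 lie strictly on the same side of the plane through v1, v3, v4; and v5 and v1 lie strictly on the same side of the plane through v2, v3, v4. Then the open segment from v1 to v2 meets the intrinsic interior of the triangle convexHull ℝ {v3, v4, v5}; that is, (openSegment ℝ v1 v2) ∩ intrinsicInterior ℝ (convexHull ℝ {v3,v4,v5}) ≠ ∅. -/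
/-!
Write `v₅` in barycentric coordinates `(w₀, w₁, w₂, w₃)` with respect to the tetrahedron
`v₁v₂v₃v₄`. The side of the face opposite `vᵢ` on which `v₅` lies is the sign of `wᵢ`, so the
hypotheses say exactly `w₀, w₁ > 0` and `w₂, w₃ < 0`. Moving the negative terms across,
`w₀ v₁ + w₁ v₂ = v₅ - w₂ v₃ - w₃ v₄`, and dividing by `w₀ + w₁` exhibits one point as a positive
combination both of `v₁, v₂` and of the nondegenerate triangle `v₃, v₄, v₅`, hence a point of
its relative interior.
-/

open Set

theorem Affine.Simplex.interior_subset_intrinsicInterior_convexHull {E : Type*}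
    [NormedAddCommGroup E] [NormedSpace ℝ E] {n : ℕ} (s : Affine.Simplex ℝ E n) :
    s.interior ⊆ intrinsicInterior ℝ (convexHull ℝ (range s.points)) := by
  rintro _ ⟨w, hw₁, hw, rfl⟩
  set W := vectorSpan ℝ (range s.points)
  -- Translated into `W`, the simplex becomes full-dimensional, so there its interior is cut out
  -- by the positivity of the barycentric coordinates.
  let q : Fin (n + 1) → W := fun i =>
    ⟨s.points i -ᵥ s.points 0, vsub_mem_vectorSpan ℝ (mem_range_self i) (mem_range_self 0)⟩
  let χ : W →ᵃⁱ[ℝ] E := (AffineIsometryEquiv.vaddConst ℝ (s.points 0)).toAffineIsometry.comp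
    W.subtypeₗᵢ.toAffineIsometry
  have hχq : χ.toAffineMap ∘ q = s.points := by
    ext i; simp [χ, q]
  have hq : AffineIndependent ℝ q := .of_comp χ.toAffineMap (hχq ▸ s.independent)
  have htop : affineSpan ℝ (range q) = ⊤ := by
    rw [hq.affineSpan_eq_top_iff_card_eq_finrank_add_one,
      s.independent.finrank_vectorSpan (Fintype.card_fin _)]
    simp
  let b : AffineBasis (Fin (n + 1)) ℝ W := ⟨q, hq, htop⟩
  have hhull : convexHull ℝ (range s.points) = χ '' convexHull ℝ (range q) := by
    rw [← hχq, range_comp, ← AffineMap.image_convexHull]; rfl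
  rw [hhull, AffineIsometry.intrinsicInterior_image]
  refine ⟨Finset.univ.affineCombination ℝ q w, interior_subset_intrinsicInterior ?_, ?_⟩
  · rw [show range q = range b from rfl, b.interior_convexHull]
    intro i
    rw [show q = b from rfl, b.coord_apply_combination_of_mem (Finset.mem_univ i) hw₁]
    exact (hw i).1
  · rw [← hχq]
    exact Finset.map_affineCombination _ _ _ hw₁ χ.toAffineMap

theorem exists_mem_openSegment_eq_affineCombination {k V : Type*} [Field k] [LinearOrder k]
    [IsStrictOrderedRing k] [AddCommGroup V] [Module k V] {a b c d : k}
    (hsum : a + b + c + d = 1) (ha : 0 < a) (hb : 0 < b) (hc : c < 0) (hd : d < 0)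
    (v₁ v₂ v₃ v₄ : V) :
    ∃ x ∈ openSegment k v₁ v₂, ∃ w : Fin 3 → k, ∑ i, w i = 1 ∧ (∀ i, w i ∈ Ioo 0 1) ∧
      Finset.univ.affineCombination k ![v₃, v₄, a • v₁ + b • v₂ + c • v₃ + d • v₄] w = x := by
  have hs : 0 < a + b := add_pos ha hb
  have hw : ∑ i, ![-c / (a + b), -d / (a + b), 1 / (a + b)] i = 1 := by
    simp only [Fin.sum_univ_three, Matrix.cons_val]
    field_simp
    linarith
  refine ⟨(a / (a + b)) • v₁ + (b / (a + b)) • v₂,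
    ⟨_, _, div_pos ha hs, div_pos hb hs, by field_simp, rfl⟩, _, hw, fun i => ?_, ?_⟩
  · fin_cases i <;> simp only [Fin.zero_eta, Fin.mk_one, Fin.reduceFinMk, Matrix.cons_val] <;>
      exact ⟨by apply div_pos <;> linarith, by rw [div_lt_one hs]; linarith⟩
  · rw [Finset.univ.affineCombination_eq_linear_combination _ _ hw]
    simp only [Fin.sum_univ_three, Matrix.cons_val]
    match_scalars <;> field_simp <;> ring

theorem exists_barycentric_coords_pos_pos_neg_neg {k V : Type*} [Field k] [LinearOrder k]
    [IsStrictOrderedRing k] [AddCommGroup V] [Module k V] {v₁ v₂ v₃ v₄ v₅ : V}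
    (h₁₂₃₄ : AffineIndependent k ![v₁, v₂, v₃, v₄])
    (h₅ : v₅ ∈ affineSpan k (range ![v₁, v₂, v₃, v₄]))
    (hA : (affineSpan k ({v₁, v₂, v₃} : Set V)).SOppSide v₅ v₄)
    (hB : (affineSpan k ({v₁, v₂, v₄} : Set V)).SOppSide v₅ v₃)
    (hC : (affineSpan k ({v₁, v₃, v₄} : Set V)).SSameSide v₅ v₂)
    (hD : (affineSpan k ({v₂, v₃, v₄} : Set V)).SSameSide v₅ v₁) :
    ∃ a b c d : k, a + b + c + d = 1 ∧ 0 < a ∧ 0 < b ∧ c < 0 ∧ d < 0 ∧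
      v₅ = a • v₁ + b • v₂ + c • v₃ + d • v₄ := by
  let T : Affine.Simplex k V 3 := ⟨![v₁, v₂, v₃, v₄], h₁₂₃₄⟩
  obtain ⟨w, hw, hv₅⟩ := eq_affineCombination_of_mem_affineSpan_of_fintype (p := T.points) h₅
  refine ⟨w 0, w 1, w 2, w 3, by simpa [Fin.sum_univ_four] using hw, ?_, ?_, ?_, ?_,
    by simp [hv₅, Finset.univ.affineCombination_eq_linear_combination _ _ hw, Fin.sum_univ_four, T]⟩
  · have hface : range (T.faceOpposite 0).points = {v₂, v₃, v₄} := by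
      ext; simp [T, Fin.exists_fin_succ, eq_comm]
    rwa [← T.sSameSide_affineSpan_faceOpposite_point_right_iff hw, hface, ← hv₅]
  · have hface : range (T.faceOpposite 1).points = {v₁, v₃, v₄} := by
      ext; simp [T, Fin.exists_fin_succ, eq_comm]
    rwa [← T.sSameSide_affineSpan_faceOpposite_point_right_iff hw, hface, ← hv₅]
  · have hface : range (T.faceOpposite 2).points = {v₁, v₂, v₄} := by
      ext; simp [T, Fin.exists_fin_succ, eq_comm]
    rwa [← T.sOppSide_affineSpan_faceOpposite_point_right_iff hw, hface, ← hv₅]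
  · have hface : range (T.faceOpposite 3).points = {v₁, v₂, v₃} := by
      ext; simp [T, Fin.exists_fin_succ, eq_comm]
    rwa [← T.sOppSide_affineSpan_faceOpposite_point_right_iff hw, hface, ← hv₅]

theorem segment_pierces_triangle_case_c_general
    (v₁ v₂ v₃ v₄ v₅ : EuclideanSpace ℝ (Fin 3))
    (h₁₂₃₄ : AffineIndependent ℝ ![v₁, v₂, v₃, v₄])
    (h₁₃₄₅ : AffineIndependent ℝ ![v₁, v₃, v₄, v₅])
    (hA : (affineSpan ℝ ({v₁, v₂, v₃} : Set (EuclideanSpace ℝ (Fin 3)))).SOppSide v₅ v₄)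
    (hB : (affineSpan ℝ ({v₁, v₂, v₄} : Set (EuclideanSpace ℝ (Fin 3)))).SOppSide v₅ v₃)
    (hC : (affineSpan ℝ ({v₁, v₃, v₄} : Set (EuclideanSpace ℝ (Fin 3)))).SSameSide v₅ v₂)
    (hD : (affineSpan ℝ ({v₂, v₃, v₄} : Set (EuclideanSpace ℝ (Fin 3)))).SSameSide v₅ v₁) :
    (openSegment ℝ v₁ v₂ ∩
      intrinsicInterior ℝ (convexHull ℝ ({v₃, v₄, v₅} : Set (EuclideanSpace ℝ (Fin 3))))) ≠ ∅ := by
  have hspan : affineSpan ℝ (range ![v₁, v₂, v₃, v₄]) = ⊤ := by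
    rw [h₁₂₃₄.affineSpan_eq_top_iff_card_eq_finrank_add_one]; simp
  obtain ⟨a, b, c, d, hsum, ha, hb, hc, hd, hv₅⟩ := exists_barycentric_coords_pos_pos_neg_neg
    h₁₂₃₄ (hspan ▸ AffineSubspace.mem_top ℝ _ v₅) hA hB hC hD
  obtain ⟨x, hx, u, hu, hu01, hux⟩ :=
    exists_mem_openSegment_eq_affineCombination hsum ha hb hc hd v₁ v₂ v₃ v₄
  let t : Affine.Simplex ℝ (EuclideanSpace ℝ (Fin 3)) 2 :=
    ⟨![v₃, v₄, v₅], h₁₃₄₅.comp_embedding (Fin.succEmb 3)⟩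
  have ht : range t.points = {v₃, v₄, v₅} := by
    ext; simp [t, eq_comm]; tauto
  have hxt : x ∈ t.interior :=
    ⟨u, hu, hu01, by rw [show t.points = ![v₃, v₄, v₅] from rfl, hv₅]; exact hux⟩
  exact nonempty_iff_ne_empty.1
    ⟨x, hx, ht ▸ t.interior_subset_intrinsicInterior_convexHull hxt⟩

/-- Case (c) of the classification of linear embeddings of K₅: five points in general
position (every four affinely independent) such that `v₅` lies strictly outside exactly
the two faces of the tetrahedron ⟨v₁,v₂,v₃,v₄⟩ containing the edge `v₁v₂` form two
tetrahedra glued along the face ⟨v₃,v₄,v₅⟩, with the open segment `v₁v₂` piercing the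
relative interior of the triangle ⟨v₃,v₄,v₅⟩. -/
theorem segment_pierces_triangle_case_c
    (v₁ v₂ v₃ v₄ v₅ : EuclideanSpace ℝ (Fin 3))
    (h₁₂₃₄ : AffineIndependent ℝ ![v₁, v₂, v₃, v₄])
    (h₁₂₃₅ : AffineIndependent ℝ ![v₁, v₂, v₃, v₅])
    (h₁₂₄₅ : AffineIndependent ℝ ![v₁, v₂, v₄, v₅])
    (h₁₃₄₅ : AffineIndependent ℝ ![v₁, v₃, v₄, v₅])
    (h₂₃₄₅ : AffineIndependent ℝ ![v₂, v₃, v₄, v₅])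
    (hA : (affineSpan ℝ ({v₁, v₂, v₃} : Set (EuclideanSpace ℝ (Fin 3)))).SOppSide v₅ v₄)
    (hB : (affineSpan ℝ ({v₁, v₂, v₄} : Set (EuclideanSpace ℝ (Fin 3)))).SOppSide v₅ v₃)
    (hC : (affineSpan ℝ ({v₁, v₃, v₄} : Set (EuclideanSpace ℝ (Fin 3)))).SSameSide v₅ v₂)
    (hD : (affineSpan ℝ ({v₂, v₃, v₄} : Set (EuclideanSpace ℝ (Fin 3)))).SSameSide v₅ v₁) :
    (openSegment ℝ v₁ v₂ ∩
      intrinsicInterior ℝ (convexHull ℝ ({v₃, v₄, v₅} : Set (EuclideanSpace ℝ (Fin 3))))) ≠ ∅ :=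
  segment_pierces_triangle_case_c_general v₁ v₂ v₃ v₄ v₅ h₁₂₃₄ h₁₃₄₅ hA hB hC hD
end

section
/- Let v1, v2, v3, v4, v5 be five points of ℝ³ in general position (every four of them affinely independent) satisfying: v5 and v4 lie strictly on opposite sides of the plane through v1, v2, v3; v5 and v3 lie strictly on opposite sides of the plane through v1, v2, v4; v5 and v2 lie strictly on opposite sides of the plane through v1, v3, v4; and v5 and v1 lie strictly on the same side of the plane through v2, v3, v4. Then v1 lies in the interior of the convex hull of {v2, v3, v4, v5}; that is, v1 ∈ interior (convexHull ℝ {v2,v3,v4,v5}). -/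
/-!
Write `v₅ = α v₁ + β v₂ + γ v₃ + δ v₄` in barycentric coordinates with respect to the tetrahedron
`⟨v₁,v₂,v₃,v₄⟩`. The side of the face opposite a vertex on which `v₅` lies is the sign of the
corresponding coordinate, so the hypotheses say `α > 0` and `β, γ, δ < 0`. Solving for `v₁` gives
`v₁ = (-β/α) v₂ + (-γ/α) v₃ + (-δ/α) v₄ + (1/α) v₅`, a convex combination with strictly positive
weights, i.e. a point of the open tetrahedron `⟨v₂,v₃,v₄,v₅⟩`.
-/

open Finset

theorem AffineIndependent.affineCombination_mem_interior_convexHull {ι E : Type*} [Fintype ι]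
    [NormedAddCommGroup E] [NormedSpace ℝ E] [FiniteDimensional ℝ E] {p : ι → E}
    (hp : AffineIndependent ℝ p) (hcard : Fintype.card ι = Module.finrank ℝ E + 1) {w : ι → ℝ}
    (hw : ∑ i, w i = 1) (hpos : ∀ i, 0 < w i) :
    univ.affineCombination ℝ p w ∈ interior (convexHull ℝ (Set.range p)) := by
  let b : AffineBasis ι ℝ E := ⟨p, hp, hp.affineSpan_eq_top_iff_card_eq_finrank_add_one.mpr hcard⟩
  change _ ∈ interior (convexHull ℝ (Set.range b))
  rw [b.interior_convexHull]
  intro i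
  change 0 < b.coord i (univ.affineCombination ℝ b w)
  rw [b.coord_apply_combination_of_mem (mem_univ i) hw]
  exact hpos i

theorem mem_interior_convexHull_of_barycentric_signs {E : Type*} [NormedAddCommGroup E]
    [NormedSpace ℝ E] [FiniteDimensional ℝ E] (hdim : Module.finrank ℝ E = 3)
    {v₁ v₂ v₃ v₄ v₅ : E} (hind : AffineIndependent ℝ ![v₂, v₃, v₄, v₅]) {w : Fin 4 → ℝ}
    (hw : ∑ i, w i = 1) (hv₅ : univ.affineCombination ℝ ![v₁, v₂, v₃, v₄] w = v₅)
    (h₀ : 0 < w 0) (h₁ : w 1 < 0) (h₂ : w 2 < 0) (h₃ : w 3 < 0) :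
    v₁ ∈ interior (convexHull ℝ {v₂, v₃, v₄, v₅}) := by
  have hv₅' : v₅ = w 0 • v₁ + w 1 • v₂ + w 2 • v₃ + w 3 • v₄ := by
    rw [← hv₅, univ.affineCombination_eq_linear_combination _ _ hw, Fin.sum_univ_four]
    rfl
  set w' : Fin 4 → ℝ := ![-w 1 / w 0, -w 2 / w 0, -w 3 / w 0, (w 0)⁻¹]
  have hw' : ∑ i, w' i = 1 := by
    rw [Fin.sum_univ_four] at hw ⊢
    change -w 1 / w 0 + -w 2 / w 0 + -w 3 / w 0 + (w 0)⁻¹ = 1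
    field_simp
    linarith
  have hpos : ∀ i, 0 < w' i := by
    intro i
    fin_cases i
    exacts [div_pos (neg_pos.2 h₁) h₀, div_pos (neg_pos.2 h₂) h₀, div_pos (neg_pos.2 h₃) h₀,
      inv_pos.2 h₀]
  have hv₁ : v₁ = univ.affineCombination ℝ ![v₂, v₃, v₄, v₅] w' := by
    rw [univ.affineCombination_eq_linear_combination _ _ hw', Fin.sum_univ_four]
    change v₁ = (-w 1 / w 0) • v₂ + (-w 2 / w 0) • v₃ + (-w 3 / w 0) • v₄ + (w 0)⁻¹ • v₅
    rw [hv₅']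
    match_scalars <;> field_simp <;> ring
  have hrange : Set.range ![v₂, v₃, v₄, v₅] = {v₂, v₃, v₄, v₅} := by
    simp only [Matrix.range_cons, Matrix.range_empty, Set.union_empty, Set.singleton_union]
  rw [hv₁, ← hrange]
  exact hind.affineCombination_mem_interior_convexHull (by simp [hdim]) hw' hpos

theorem vertex_inside_tetrahedron_case_d_general
    (v₁ v₂ v₃ v₄ v₅ : EuclideanSpace ℝ (Fin 3))
    (h₁₂₃₄ : AffineIndependent ℝ ![v₁, v₂, v₃, v₄])
    (h₂₃₄₅ : AffineIndependent ℝ ![v₂, v₃, v₄, v₅])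
    (hA : (affineSpan ℝ ({v₁, v₂, v₃} : Set (EuclideanSpace ℝ (Fin 3)))).SOppSide v₅ v₄)
    (hB : (affineSpan ℝ ({v₁, v₂, v₄} : Set (EuclideanSpace ℝ (Fin 3)))).SOppSide v₅ v₃)
    (hC : (affineSpan ℝ ({v₁, v₃, v₄} : Set (EuclideanSpace ℝ (Fin 3)))).SOppSide v₅ v₂)
    (hD : (affineSpan ℝ ({v₂, v₃, v₄} : Set (EuclideanSpace ℝ (Fin 3)))).SSameSide v₅ v₁) :
    v₁ ∈ interior (convexHull ℝ ({v₂, v₃, v₄, v₅} : Set (EuclideanSpace ℝ (Fin 3)))) := by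
  let s : Affine.Simplex ℝ (EuclideanSpace ℝ (Fin 3)) 3 := ⟨_, h₁₂₃₄⟩
  have hspan : affineSpan ℝ (Set.range s.points) = ⊤ :=
    h₁₂₃₄.affineSpan_eq_top_iff_card_eq_finrank_add_one.mpr (by simp)
  obtain ⟨w, hw, hv₅⟩ :=
    eq_affineCombination_of_mem_affineSpan_of_fintype (hspan ▸ AffineSubspace.mem_top ℝ _ v₅)
  have hfaces : affineSpan ℝ (Set.range (s.faceOpposite 3).points) = affineSpan ℝ {v₁, v₂, v₃} ∧
      affineSpan ℝ (Set.range (s.faceOpposite 2).points) = affineSpan ℝ {v₁, v₂, v₄} ∧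
      affineSpan ℝ (Set.range (s.faceOpposite 1).points) = affineSpan ℝ {v₁, v₃, v₄} ∧
      affineSpan ℝ (Set.range (s.faceOpposite 0).points) = affineSpan ℝ {v₂, v₃, v₄} := by
    refine ⟨?_, ?_, ?_, ?_⟩ <;>
    · congr 1
      ext x
      simp [s, Fin.exists_fin_succ, eq_comm, or_comm]
  obtain ⟨hface₃, hface₂, hface₁, hface₀⟩ := hfaces
  have h₃ : w 3 < 0 := (s.sOppSide_affineSpan_faceOpposite_point_right_iff hw).1
    (by rwa [hface₃, ← hv₅])
  have h₂ : w 2 < 0 := (s.sOppSide_affineSpan_faceOpposite_point_right_iff hw).1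
    (by rwa [hface₂, ← hv₅])
  have h₁ : w 1 < 0 := (s.sOppSide_affineSpan_faceOpposite_point_right_iff hw).1
    (by rwa [hface₁, ← hv₅])
  have h₀ : 0 < w 0 := (s.sSameSide_affineSpan_faceOpposite_point_right_iff hw).1
    (by rwa [hface₀, ← hv₅])
  exact mem_interior_convexHull_of_barycentric_signs (by simp) h₂₃₄₅ hw hv₅.symm h₀ h₁ h₂ h₃

/-- Case (d) of the classification of linear embeddings of K₅: if `v₅` lies strictly
outside the three faces of the tetrahedron ⟨v₁,v₂,v₃,v₄⟩ containing `v₁` and strictly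
inside the half-space of the face ⟨v₂,v₃,v₄⟩, then `v₁` lies inside the tetrahedron
⟨v₂,v₃,v₄,v₅⟩. -/
theorem vertex_inside_tetrahedron_case_d
    (v₁ v₂ v₃ v₄ v₅ : EuclideanSpace ℝ (Fin 3))
    (h₁₂₃₄ : AffineIndependent ℝ ![v₁, v₂, v₃, v₄])
    (h₁₂₃₅ : AffineIndependent ℝ ![v₁, v₂, v₃, v₅])
    (h₁₂₄₅ : AffineIndependent ℝ ![v₁, v₂, v₄, v₅])
    (h₁₃₄₅ : AffineIndependent ℝ ![v₁, v₃, v₄, v₅])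
    (h₂₃₄₅ : AffineIndependent ℝ ![v₂, v₃, v₄, v₅])
    (hA : (affineSpan ℝ ({v₁, v₂, v₃} : Set (EuclideanSpace ℝ (Fin 3)))).SOppSide v₅ v₄)
    (hB : (affineSpan ℝ ({v₁, v₂, v₄} : Set (EuclideanSpace ℝ (Fin 3)))).SOppSide v₅ v₃)
    (hC : (affineSpan ℝ ({v₁, v₃, v₄} : Set (EuclideanSpace ℝ (Fin 3)))).SOppSide v₅ v₂)
    (hD : (affineSpan ℝ ({v₂, v₃, v₄} : Set (EuclideanSpace ℝ (Fin 3)))).SSameSide v₅ v₁) :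
    v₁ ∈ interior (convexHull ℝ ({v₂, v₃, v₄, v₅} : Set (EuclideanSpace ℝ (Fin 3)))) :=
  vertex_inside_tetrahedron_case_d_general v₁ v₂ v₃ v₄ v₅ h₁₂₃₄ h₂₃₄₅ hA hB hC hD
end

section
/- Let v : Fin 5 → ℝ³ be five points in general position (every four of them affinely independent). Then at least one of the following holds: (i) there exists an index i such that v i lies in the interior of the convex hull of the other four points; or (ii) there exist two distinct indices i, j such that the open segment from v i to v j meets the intrinsic interior of the triangle formed as the convex hull of the remaining three points. -/
/-!
Five points of ℝ³ satisfy a nontrivial affine dependence `∑ cᵢ vᵢ = 0`, `∑ cᵢ = 0`, and general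
position forces every `cᵢ ≠ 0`, since a dependence with `cᵢ = 0` is one among the other four
points. Up to a global sign at most two coefficients are positive. Moving the negative terms
across and dividing by the total positive weight `S`, the point `∑_{cᵢ > 0} (cᵢ / S) vᵢ` is a
combination of the other points with positive weights summing to one. Positive barycentric
coordinates put a point in the (relative) interior of a simplex, so one positive coefficient puts
`vᵢ` inside the tetrahedron of the other four, and two put a point of the open edge `vᵢvⱼ` inside
the opposite triangle.
-/

open Finset Module

section Simplex

variable {ι V : Type*} [Fintype ι] [NormedAddCommGroup V] [NormedSpace ℝ V]
  {p : ι → V} {w : ι → ℝ}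

theorem AffineIndependent.affineCombination_mem_interior_convexHull_s6
    (hp : AffineIndependent ℝ p) (hspan : affineSpan ℝ (Set.range p) = ⊤)
    (hw1 : ∑ i, w i = 1) (hw : ∀ i, 0 < w i) :
    univ.affineCombination ℝ p w ∈ interior (convexHull ℝ (Set.range p)) := by
  let b : AffineBasis ι ℝ V := ⟨p, hp, hspan⟩
  change _ ∈ interior (convexHull ℝ (Set.range b))
  rw [b.interior_convexHull]
  intro i
  change 0 < b.coord i (univ.affineCombination ℝ b w)
  rw [b.coord_apply_combination_of_mem (mem_univ i) hw1]
  exact hw i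

theorem AffineIndependent.affineCombination_mem_intrinsicInterior_convexHull
    (hp : AffineIndependent ℝ p) (hw1 : ∑ i, w i = 1) (hw : ∀ i, 0 < w i) :
    univ.affineCombination ℝ p w ∈ intrinsicInterior ℝ (convexHull ℝ (Set.range p)) := by
  obtain ⟨i₀, -⟩ := nonempty_of_sum_ne_zero (hw1.trans_ne one_ne_zero)
  have : Nonempty ι := ⟨i₀⟩
  -- Translate the simplex into the direction of its span, where it is full-dimensional.
  set D := vectorSpan ℝ (Set.range p)
  let q : ι → D := fun i =>
    ⟨p i -ᵥ p i₀, vsub_mem_vectorSpan ℝ (Set.mem_range_self i) (Set.mem_range_self i₀)⟩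
  let φ : D →ᵃⁱ[ℝ] V :=
    (AffineIsometryEquiv.constVAdd ℝ V (p i₀)).toAffineIsometry.comp D.subtypeₗᵢ.toAffineIsometry
  have hφq : φ ∘ q = p := funext fun i => by simp [φ, q]
  have hq : AffineIndependent ℝ q := .of_comp φ.toAffineMap (by simpa [φ.coe_toAffineMap, hφq])
  have hspan : affineSpan ℝ (Set.range q) = ⊤ :=
    hq.affineSpan_eq_top_iff_card_eq_finrank_add_one.2 hp.finrank_vectorSpan_add_one.symm
  have hhull : φ '' convexHull ℝ (Set.range q) = convexHull ℝ (Set.range p) := by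
    rw [← φ.coe_toAffineMap, AffineMap.image_convexHull, ← Set.range_comp, φ.coe_toAffineMap, hφq]
  rw [← hhull, φ.intrinsicInterior_image, ← hφq, ← φ.coe_toAffineMap,
    ← univ.map_affineCombination q w hw1]
  exact Set.mem_image_of_mem _ (interior_subset_intrinsicInterior
    (hq.affineCombination_mem_interior_convexHull_s6 hspan hw1 hw))

end Simplex

section AffineDependence

variable {ι k V : Type*} [Fintype ι] [Field k] [AddCommGroup V] [Module k V]

theorem Fintype.sum_subtype_ne_eq_neg {M : Type*} [AddCommGroup M] [DecidableEq ι] {f : ι → M}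
    (hf : ∑ i, f i = 0) (i : ι) : ∑ j : {j // j ≠ i}, f j = -f i :=
  eq_neg_of_add_eq_zero_right ((Fintype.sum_eq_add_sum_subtype_ne f i).symm.trans hf)

theorem Fintype.sum_subtype_ne_ne_eq_neg {M : Type*} [AddCommGroup M] [DecidableEq ι]
    {f : ι → M} (hf : ∑ i, f i = 0) {i j : ι} (hij : i ≠ j) :
    ∑ l : {l // l ≠ i ∧ l ≠ j}, f l = -(f i + f j) := by
  rw [← Finset.sum_subtype ((univ.erase i).erase j) (by simp [and_comm]) f,
    sum_erase_eq_sub (by simp [hij.symm]), sum_erase_eq_sub (mem_univ i), hf]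
  abel

theorem exists_affine_dependence_of_finrank_succ_lt_card [FiniteDimensional k V] (v : ι → V)
    (h : finrank k V + 1 < Fintype.card ι) :
    ∃ c : ι → k, ∑ i, c i = 0 ∧ ∑ i, c i • v i = 0 ∧ ∃ i, c i ≠ 0 := by
  have hv : ¬ AffineIndependent k v := fun hv =>
    (hv.card_le_finrank_succ.trans (Nat.add_le_add_right (Submodule.finrank_le _) 1)).not_gt h
  simp only [affineIndependent_iff_of_fintype, not_forall] at hv
  obtain ⟨c, hc0, hcv, i, hi⟩ := hv
  exact ⟨c, hc0, by rwa [univ.weightedVSub_eq_linear_combination hc0] at hcv, i, hi⟩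

theorem eq_zero_of_affine_dependence_of_apply_eq_zero {v : ι → V} {c : ι → k}
    (hv : ∀ i : ι, AffineIndependent k fun j : {j // j ≠ i} => v j)
    (hc0 : ∑ i, c i = 0) (hcv : ∑ i, c i • v i = 0) {i : ι} (hi : c i = 0) (j : ι) :
    c j = 0 := by
  classical
  obtain rfl | hji := eq_or_ne j i
  · exact hi
  have h0 : ∑ j : {j // j ≠ i}, c j = 0 := by
    rw [Fintype.sum_subtype_ne_eq_neg hc0, hi, neg_zero]
  have h1 : ∑ j : {j // j ≠ i}, c j • v j = 0 := by
    rw [Fintype.sum_subtype_ne_eq_neg hcv, hi, zero_smul, neg_zero]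
  exact (hv i).eq_zero_of_sum_eq_zero h0 h1 ⟨j, hji⟩ (mem_univ _)

end AffineDependence

section Signs

variable {ι : Type*} [Fintype ι] {c : ι → ℝ}

theorem card_filter_pos_add_card_filter_neg (hc : ∀ i, c i ≠ 0) :
    #{i | 0 < c i} + #{i | c i < 0} = Fintype.card ι := by
  rw [← card_univ, ← card_filter_add_card_filter_not (s := univ) (fun i => 0 < c i)]
  congr 2
  ext i
  simp only [mem_filter, mem_univ, true_and, not_lt]
  exact ⟨le_of_lt, fun h => h.lt_of_ne (hc i)⟩

theorem exists_pos_forall_ne_neg_or_exists_two_pos [Nonempty ι] (hc0 : ∑ i, c i = 0)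
    (hc : ∀ i, c i ≠ 0) (hpos : #{i | 0 < c i} ≤ 2) :
    (∃ i, 0 < c i ∧ ∀ j ≠ i, c j < 0) ∨
      ∃ i j, i ≠ j ∧ 0 < c i ∧ 0 < c j ∧ ∀ l, l ≠ i → l ≠ j → c l < 0 := by
  classical
  have hneg : ∀ i, ¬ 0 < c i → c i < 0 := fun i h => (not_lt.1 h).lt_of_ne (hc i)
  have hne : 0 < #{i | 0 < c i} := by
    refine card_pos.2 (not_not.1 fun h => ?_)
    rw [not_nonempty_iff_eq_empty, filter_eq_empty_iff] at h
    have := sum_neg (fun i _ => hneg i (h (mem_univ i))) univ_nonempty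
    linarith
  interval_cases h : #{i | 0 < c i}
  · obtain ⟨i, hi⟩ := card_eq_one.1 h
    simp only [Finset.ext_iff, mem_filter, mem_univ, true_and, mem_singleton] at hi
    exact .inl ⟨i, (hi i).2 rfl, fun j hj => hneg j (mt (hi j).1 hj)⟩
  · obtain ⟨i, j, hij, hP⟩ := card_eq_two.1 h
    simp only [Finset.ext_iff, mem_filter, mem_univ, true_and, mem_insert, mem_singleton] at hP
    exact .inr ⟨i, j, hij, (hP i).2 (.inl rfl), (hP j).2 (.inr rfl),
      fun l hli hlj => hneg l fun hl => ((hP l).1 hl).elim hli hlj⟩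

end Signs

section Radon

variable {ι V : Type*} [Fintype ι] [NormedAddCommGroup V] [NormedSpace ℝ V]
  {v : ι → V} {c : ι → ℝ}

theorem affineCombination_div_eq_of_sum_smul_eq {κ : Type*} [Fintype κ] {a : κ → ℝ}
    {u : κ → V} {S : ℝ} {x : V} (hS : S ≠ 0) (ha : ∑ l, a l = S) (hau : ∑ l, a l • u l = S • x) :
    ∑ l, a l / S = 1 ∧ univ.affineCombination ℝ u (fun l => a l / S) = x := by
  have hw1 : ∑ l, a l / S = 1 := by rw [← sum_div, ha, div_self hS]
  refine ⟨hw1, ?_⟩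
  simp_rw [univ.affineCombination_eq_linear_combination u _ hw1, div_eq_inv_mul, mul_smul,
    ← smul_sum, hau, inv_smul_smul₀ hS]

theorem mem_interior_convexHull_of_affine_dependence {i : ι}
    (hv : AffineIndependent ℝ fun j : {j // j ≠ i} => v j)
    (hspan : affineSpan ℝ (Set.range fun j : {j // j ≠ i} => v j) = ⊤)
    (hc0 : ∑ j, c j = 0) (hcv : ∑ j, c j • v j = 0) (hi : 0 < c i) (hneg : ∀ j ≠ i, c j < 0) :
    v i ∈ interior (convexHull ℝ (v '' {j | j ≠ i})) := by
  classical
  obtain ⟨hw1, hx⟩ := affineCombination_div_eq_of_sum_smul_eq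
    (a := fun j : {j // j ≠ i} => -c j) (u := fun j => v j) hi.ne'
    (by rw [sum_neg_distrib, Fintype.sum_subtype_ne_eq_neg hc0, neg_neg])
    (by simp_rw [neg_smul]; rw [sum_neg_distrib, Fintype.sum_subtype_ne_eq_neg hcv, neg_neg])
  rw [Set.image_eq_range, ← hx]
  exact hv.affineCombination_mem_interior_convexHull_s6 hspan hw1
    fun j => div_pos (neg_pos.2 (hneg j j.2)) hi

theorem openSegment_inter_intrinsicInterior_convexHull_nonempty_of_affine_dependence {i j : ι}
    (hij : i ≠ j) (hv : AffineIndependent ℝ fun l : {l // l ≠ i ∧ l ≠ j} => v l)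
    (hc0 : ∑ l, c l = 0) (hcv : ∑ l, c l • v l = 0) (hi : 0 < c i) (hj : 0 < c j)
    (hneg : ∀ l, l ≠ i → l ≠ j → c l < 0) :
    (openSegment ℝ (v i) (v j) ∩
      intrinsicInterior ℝ (convexHull ℝ (v '' {l | l ≠ i ∧ l ≠ j}))).Nonempty := by
  classical
  set S := c i + c j
  have hS : 0 < S := add_pos hi hj
  obtain ⟨hw1, hx⟩ := affineCombination_div_eq_of_sum_smul_eq
    (a := fun l : {l // l ≠ i ∧ l ≠ j} => -c l) (u := fun l => v l)
    (x := S⁻¹ • (c i • v i + c j • v j)) hS.ne'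
    (by rw [sum_neg_distrib, Fintype.sum_subtype_ne_ne_eq_neg hc0 hij, neg_neg])
    (by simp_rw [neg_smul]
        rw [sum_neg_distrib, Fintype.sum_subtype_ne_ne_eq_neg hcv hij, neg_neg,
          smul_inv_smul₀ hS.ne'])
  refine ⟨S⁻¹ • (c i • v i + c j • v j), ⟨c i / S, c j / S, div_pos hi hS, div_pos hj hS,
    by rw [← add_div, div_self hS.ne'],
    by rw [smul_add, smul_smul, smul_smul, div_eq_inv_mul, div_eq_inv_mul]⟩, ?_⟩
  rw [Set.image_eq_range, ← hx]
  exact hv.affineCombination_mem_intrinsicInterior_convexHull hw1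
    fun l => div_pos (neg_pos.2 (hneg l l.2.1 l.2.2)) hS

end Radon

/-- Classification of linear embeddings of K₅ in general position (existence part): for
five points of ℝ³ in general position, either some point lies inside the tetrahedron
spanned by the other four, or some open edge pierces the relative interior of the
triangle spanned by the remaining three points. -/
theorem K5_general_position_classification
    (v : Fin 5 → EuclideanSpace ℝ (Fin 3))
    (hgp : ∀ i : Fin 5, AffineIndependent ℝ (fun j : {j : Fin 5 // j ≠ i} => v j)) :
    (∃ i : Fin 5, v i ∈ interior (convexHull ℝ (v '' {j | j ≠ i}))) ∨
    (∃ i j : Fin 5, i ≠ j ∧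
      (openSegment ℝ (v i) (v j) ∩
        intrinsicInterior ℝ (convexHull ℝ (v '' {k | k ≠ i ∧ k ≠ j}))) ≠ ∅) := by
  obtain ⟨c, hc0, hcv, i₀, hi₀⟩ :=
    exists_affine_dependence_of_finrank_succ_lt_card (k := ℝ) v (by simp)
  have hc : ∀ i, c i ≠ 0 := fun i hi =>
    hi₀ (eq_zero_of_affine_dependence_of_apply_eq_zero hgp hc0 hcv hi i₀)
  clear i₀ hi₀
  wlog hpos : #{i | 0 < c i} ≤ 2 generalizing c
  · refine this (-c) (by simp [hc0]) (by simp [neg_smul, hcv]) (fun i => neg_ne_zero.2 (hc i)) ?_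
    have := card_filter_pos_add_card_filter_neg hc
    simp only [Pi.neg_apply, neg_pos, Fintype.card_fin] at this ⊢
    omega
  rcases exists_pos_forall_ne_neg_or_exists_two_pos hc0 hc hpos with
    ⟨i, hi, hneg⟩ | ⟨i, j, hij, hi, hj, hneg⟩
  · have hspan := (hgp i).affineSpan_eq_top_iff_card_eq_finrank_add_one.2 (by simp)
    exact .inl ⟨i, mem_interior_convexHull_of_affine_dependence (hgp i) hspan hc0 hcv hi hneg⟩
  · have hv := (hgp i).comp_embedding
      (Subtype.impEmbedding _ _ fun l (hl : l ≠ i ∧ l ≠ j) => hl.1)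
    exact .inr ⟨i, j, hij,
      (openSegment_inter_intrinsicInterior_convexHull_nonempty_of_affine_dependence
        hij hv hc0 hcv hi hj hneg).ne_empty⟩
end

section
/- Let v : Fin 5 → ℝ³ be five points in general position (every four of them affinely independent). Then the two configurations are mutually exclusive: if some index i satisfies that v i lies in the interior of the convex hull of the other four points, then there is no pair of distinct indices j, k such that the open segment from v j to v k meets the intrinsic interior of the triangle formed as the convex hull of the remaining three points. -/
open Set

/-- Construct the affine basis from the four points other than `i`. -/
noncomputable def K5basis (v : Fin 5 → EuclideanSpace ℝ (Fin 3)) (i : Fin 5)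
    (hind : AffineIndependent ℝ (fun j : {j : Fin 5 // j ≠ i} => v j)) :
    AffineBasis {j : Fin 5 // j ≠ i} ℝ (EuclideanSpace ℝ (Fin 3)) :=
  ⟨fun j => v j, hind, by
    rw [hind.affineSpan_eq_top_iff_card_eq_finrank_add_one]
    simp [finrank_euclideanSpace_fin]⟩

lemma K5_coord_pos (v : Fin 5 → EuclideanSpace ℝ (Fin 3)) (i : Fin 5)
    (hind : AffineIndependent ℝ (fun j : {j : Fin 5 // j ≠ i} => v j))
    (hi : v i ∈ interior (convexHull ℝ (v '' {j | j ≠ i})))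
    (l : {j : Fin 5 // j ≠ i}) : 0 < (K5basis v i hind).coord l (v i) := by
  have hr : Set.range ⇑(K5basis v i hind) = v '' {j | j ≠ i} := by
    rw [Set.image_eq_range]; rfl
  rw [← hr, (K5basis v i hind).interior_convexHull] at hi
  exact hi l

/-- Coordinate `l` vanishes on the convex hull of points whose indices avoid `l`. -/
lemma K5_coord_zero (v : Fin 5 → EuclideanSpace ℝ (Fin 3)) (i : Fin 5)
    (hind : AffineIndependent ℝ (fun j : {j : Fin 5 // j ≠ i} => v j))
    (T : Set (Fin 5)) (l : {j : Fin 5 // j ≠ i})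
    (hT : ∀ m ∈ T, m ≠ i ∧ m ≠ (l : Fin 5))
    {x : EuclideanSpace ℝ (Fin 3)} (hx : x ∈ convexHull ℝ (v '' T)) :
    (K5basis v i hind).coord l x = 0 := by
  set b := K5basis v i hind
  have hmem : b.coord l x ∈ convexHull ℝ (⇑(b.coord l) '' (v '' T)) := by
    rw [← AffineMap.image_convexHull]
    exact Set.mem_image_of_mem _ hx
  have hsub : ⇑(b.coord l) '' (v '' T) ⊆ {0} := by
    rintro y ⟨z, ⟨m, hm, rfl⟩, rfl⟩
    have hmi : m ≠ i := (hT m hm).1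
    have : v m = b ⟨m, hmi⟩ := rfl
    rw [this, b.coord_apply, if_neg]
    · rfl
    · intro h
      exact (hT m hm).2 (congrArg Subtype.val h).symm
  have := convexHull_min hsub (convex_singleton 0) hmem
  simpa using this

/-- Coordinate of a point on the segment between two basis points. -/
lemma K5_coord_lineMap (v : Fin 5 → EuclideanSpace ℝ (Fin 3)) (i : Fin 5)
    (hind : AffineIndependent ℝ (fun j : {j : Fin 5 // j ≠ i} => v j))
    (l : {j : Fin 5 // j ≠ i}) (p q : EuclideanSpace ℝ (Fin 3)) (t : ℝ) :
    (K5basis v i hind).coord l (AffineMap.lineMap p q t) =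
      (1 - t) * (K5basis v i hind).coord l p + t * (K5basis v i hind).coord l q := by
  rw [((K5basis v i hind).coord l).apply_lineMap, AffineMap.lineMap_apply_module]
  simp only [smul_eq_mul]

lemma K5_coord_basis (v : Fin 5 → EuclideanSpace ℝ (Fin 3)) (i : Fin 5)
    (hind : AffineIndependent ℝ (fun j : {j : Fin 5 // j ≠ i} => v j))
    (l m : {j : Fin 5 // j ≠ i}) :
    (K5basis v i hind).coord l (v m) = if l = m then 1 else 0 := by
  have : v (m : Fin 5) = K5basis v i hind m := rfl
  rw [this, (K5basis v i hind).coord_apply]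

/-- Case 1: an edge out of the interior point cannot meet the hull of the other three. -/
lemma K5_case_inner (v : Fin 5 → EuclideanSpace ℝ (Fin 3)) (i k : Fin 5)
    (hind : AffineIndependent ℝ (fun j : {j : Fin 5 // j ≠ i} => v j))
    (hi : v i ∈ interior (convexHull ℝ (v '' {j | j ≠ i})))
    (hki : k ≠ i) {x : EuclideanSpace ℝ (Fin 3)}
    (hseg : x ∈ segment ℝ (v i) (v k))
    (htri : x ∈ convexHull ℝ (v '' {l | l ≠ i ∧ l ≠ k})) : False := by
  set b := K5basis v i hind with hb
  set k' : {j : Fin 5 // j ≠ i} := ⟨k, hki⟩ with hk'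
  have hc : 0 < b.coord k' (v i) := K5_coord_pos v i hind hi k'
  have hzero : b.coord k' x = 0 :=
    K5_coord_zero v i hind _ k' (fun m hm => ⟨hm.1, hm.2⟩) htri
  rw [segment_eq_image_lineMap] at hseg
  obtain ⟨t, ht, rfl⟩ := hseg
  have h1 : b.coord k' (v (k' : Fin 5)) = 1 := by rw [K5_coord_basis, if_pos rfl]
  have hl := K5_coord_lineMap v i hind k' (v i) (v k) t
  rw [← hb] at hl
  rw [hzero] at hl
  have ht0 : 0 ≤ t := ht.1
  have ht1 : t ≤ 1 := ht.2
  have hkk : b.coord k' (v k) = 1 := h1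
  rw [hkk] at hl
  nlinarith [hc, hl, mul_nonneg (by linarith : (0:ℝ) ≤ 1 - t) hc.le]

/-- Case 2: an edge between two non-`i` points cannot meet the hull of the
remaining three (which include `v i`). -/
lemma K5_case_outer (v : Fin 5 → EuclideanSpace ℝ (Fin 3)) (i j k : Fin 5)
    (hind : AffineIndependent ℝ (fun j : {j : Fin 5 // j ≠ i} => v j))
    (hi : v i ∈ interior (convexHull ℝ (v '' {j | j ≠ i})))
    (hji : j ≠ i) (hki : k ≠ i) (hjk : j ≠ k) {x : EuclideanSpace ℝ (Fin 3)}
    (hseg : x ∈ segment ℝ (v j) (v k))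
    (htri : x ∈ convexHull ℝ (v '' {l | l ≠ j ∧ l ≠ k})) : False := by
  set b := K5basis v i hind with hb
  set j' : {l : Fin 5 // l ≠ i} := ⟨j, hji⟩ with hj'
  set k' : {l : Fin 5 // l ≠ i} := ⟨k, hki⟩ with hk'
  set c : {l : Fin 5 // l ≠ i} → ℝ := fun l => b.coord l (v i) with hcdef
  have hcpos : ∀ l, 0 < c l := fun l => K5_coord_pos v i hind hi l
  -- there is a fourth index
  have hex : ∃ l : Fin 5, l ≠ i ∧ l ≠ j ∧ l ≠ k := by
    by_contra hcon
    push_neg at hcon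
    have hsub : (Finset.univ : Finset (Fin 5)) ⊆ {i, j, k} := by
      intro l _
      simp only [Finset.mem_insert, Finset.mem_singleton]
      by_cases h1 : l = i
      · exact Or.inl h1
      by_cases h2 : l = j
      · exact Or.inr (Or.inl h2)
      exact Or.inr (Or.inr (hcon l h1 h2))
    have h5 := Finset.card_le_card hsub
    have h3 : ({i, j, k} : Finset (Fin 5)).card ≤ 3 := by
      apply le_trans (Finset.card_insert_le _ _)
      have := Finset.card_insert_le j ({k} : Finset (Fin 5))
      simp at this ⊢
      omega
    simp [Finset.card_univ] at h5
    omega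
  obtain ⟨m, hmi, hmj, hmk⟩ := hex
  set m' : {l : Fin 5 // l ≠ i} := ⟨m, hmi⟩ with hm'
  have hmj' : m' ≠ j' := fun h => hmj (congrArg Subtype.val h)
  have hmk' : m' ≠ k' := fun h => hmk (congrArg Subtype.val h)
  have hjk' : j' ≠ k' := fun h => hjk (congrArg Subtype.val h)
  -- ∑ of coords of v i is 1, so c j' + c k' < 1
  have hsum : ∑ l, c l = 1 := b.sum_coord_apply_eq_one (v i)
  have hlt : c j' + c k' < 1 := by
    have hsub : ({j', k'} : Finset {l : Fin 5 // l ≠ i}) ⊆ Finset.univ :=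
      Finset.subset_univ _
    have hstrict : ∑ l ∈ ({j', k'} : Finset {l : Fin 5 // l ≠ i}), c l < ∑ l, c l := by
      apply Finset.sum_lt_sum_of_subset hsub (Finset.mem_univ m')
      · simp [hmj', hmk']
      · exact hcpos m'
      · exact fun l _ _ => (hcpos l).le
    rw [Finset.sum_insert (by simp [hjk']), Finset.sum_singleton, hsum] at hstrict
    exact hstrict
  -- hull bound: coord j' x ≤ c j', coord k' x ≤ c k'
  have hbound : ∀ l' : {l : Fin 5 // l ≠ i}, ((l' : Fin 5) = j ∨ (l' : Fin 5) = k) →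
      b.coord l' x ∈ Set.Icc (0 : ℝ) (c l') := by
    intro l' hl'
    have hmem : b.coord l' x ∈ convexHull ℝ (⇑(b.coord l') '' (v '' {l | l ≠ j ∧ l ≠ k})) := by
      rw [← AffineMap.image_convexHull]
      exact Set.mem_image_of_mem _ htri
    have hsub2 : ⇑(b.coord l') '' (v '' {l | l ≠ j ∧ l ≠ k}) ⊆ Set.Icc (0 : ℝ) (c l') := by
      rintro y ⟨z, ⟨n, hn, rfl⟩, rfl⟩
      by_cases hni : n = i
      · subst hni; exact ⟨(hcpos l').le, le_refl _⟩
      · have hne : l' ≠ (⟨n, hni⟩ : {l : Fin 5 // l ≠ i}) := by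
          intro h
          have hvn : (l' : Fin 5) = n := congrArg Subtype.val h
          rcases hl' with h1 | h1
          · exact hn.1 (by rw [← hvn]; exact h1)
          · exact hn.2 (by rw [← hvn]; exact h1)
        have : b.coord l' (v n) = 0 := by
          have hrw : v n = v ((⟨n, hni⟩ : {l : Fin 5 // l ≠ i}) : Fin 5) := rfl
          rw [hrw]
          have := K5_coord_basis v i hind l' ⟨n, hni⟩
          rw [← hb] at this
          rw [this, if_neg hne]
        rw [this]
        exact ⟨le_refl _, (hcpos l').le⟩
    exact convexHull_min hsub2 (convex_Icc _ _) hmem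
  have hbj := hbound j' (Or.inl rfl)
  have hbk := hbound k' (Or.inr rfl)
  -- segment side
  rw [segment_eq_image_lineMap] at hseg
  obtain ⟨t, ht, rfl⟩ := hseg
  have hjj : b.coord j' (v j) = 1 := by
    have := K5_coord_basis v i hind j' j'
    rw [← hb] at this; rw [this, if_pos rfl]
  have hjk0 : b.coord j' (v k) = 0 := by
    have := K5_coord_basis v i hind j' k'
    rw [← hb] at this; rw [this, if_neg hjk']
  have hkj0 : b.coord k' (v j) = 0 := by
    have := K5_coord_basis v i hind k' j'
    rw [← hb] at this; rw [this, if_neg (Ne.symm hjk')]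
  have hkk : b.coord k' (v k) = 1 := by
    have := K5_coord_basis v i hind k' k'
    rw [← hb] at this; rw [this, if_pos rfl]
  have hlj := K5_coord_lineMap v i hind j' (v j) (v k) t
  have hlk := K5_coord_lineMap v i hind k' (v j) (v k) t
  rw [← hb] at hlj hlk
  rw [hjj, hjk0] at hlj
  rw [hkj0, hkk] at hlk
  have h1 := hbj.2
  have h2 := hbk.2
  rw [hlj] at h1
  rw [hlk] at h2
  linarith


/-- Classification of linear embeddings of K₅ in general position (mutual exclusivity):
if one of five points in general position lies inside the tetrahedron spanned by the
other four, then no open edge pierces the relative interior of the triangle spanned by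
the remaining three points. -/
theorem K5_general_position_mutually_exclusive
    (v : Fin 5 → EuclideanSpace ℝ (Fin 3))
    (hgp : ∀ i : Fin 5, AffineIndependent ℝ (fun j : {j : Fin 5 // j ≠ i} => v j))
    (i : Fin 5) (hi : v i ∈ interior (convexHull ℝ (v '' {j | j ≠ i}))) :
    ¬∃ j k : Fin 5, j ≠ k ∧
      (openSegment ℝ (v j) (v k) ∩
        intrinsicInterior ℝ (convexHull ℝ (v '' {l | l ≠ j ∧ l ≠ k}))) ≠ ∅ := by
  rintro ⟨j, k, hjk, hne⟩
  obtain ⟨x, hxo, hxt⟩ := Set.nonempty_iff_ne_empty.2 hne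
  have hseg : x ∈ segment ℝ (v j) (v k) := openSegment_subset_segment ℝ _ _ hxo
  have htri : x ∈ convexHull ℝ (v '' {l | l ≠ j ∧ l ≠ k}) :=
    (intrinsicInterior_subset) hxt
  by_cases hji : j = i
  · subst hji
    exact K5_case_inner v j k (hgp j) hi (Ne.symm hjk) hseg htri
  by_cases hki : k = i
  · subst hki
    have hseg' : x ∈ segment ℝ (v k) (v j) := by rwa [segment_symm]
    have htri' : x ∈ convexHull ℝ (v '' {l | l ≠ k ∧ l ≠ j}) := by
      convert htri using 4
      ext l; exact and_comm
    exact K5_case_inner v k j (hgp k) hi hjk hseg' htri'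
  · exact K5_case_outer v i j k (hgp i) hi hji hki hjk hseg htri
end

section
/- Let v : Fin 5 → ℝ³ be five points in general position (every four of them affinely independent). Then there is at most one index i such that v i lies in the interior of the convex hull of the other four points; that is, if v i and v j each lie in the interior of the convex hull of the respective other four points, then i = j. -/
open Finset

private lemma K5_inj (v : Fin 5 → EuclideanSpace ℝ (Fin 3))
    (hgp : ∀ i : Fin 5, AffineIndependent ℝ (fun j : {j : Fin 5 // j ≠ i} => v j)) :
    Function.Injective v := by
  intro k l hkl
  by_contra hne
  obtain ⟨m, hm⟩ : ∃ m : Fin 5, m ∉ ({k, l} : Finset (Fin 5)) := by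
    by_contra h
    push_neg at h
    have hsub : (Finset.univ : Finset (Fin 5)) ⊆ {k, l} := fun x _ => h x
    have := Finset.card_le_card hsub
    have h2 : ({k, l} : Finset (Fin 5)).card ≤ 2 :=
      (Finset.card_insert_le _ _).trans (by simp)
    simp [Finset.card_univ] at this
    omega
  simp only [Finset.mem_insert, Finset.mem_singleton, not_or] at hm
  have hk : k ≠ m := fun h => hm.1 h.symm
  have hl : l ≠ m := fun h => hm.2 h.symm
  have := (hgp m).injective (a₁ := ⟨k, hk⟩) (a₂ := ⟨l, hl⟩) hkl
  exact hne (congrArg Subtype.val this)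

private lemma K5_weights (v : Fin 5 → EuclideanSpace ℝ (Fin 3))
    (hinj : Function.Injective v) (i : Fin 5) {x : EuclideanSpace ℝ (Fin 3)}
    (hx : x ∈ convexHull ℝ (v '' {k | k ≠ i})) :
    ∃ a : Fin 5 → ℝ, (∀ k, 0 ≤ a k) ∧ a i = 0 ∧ ∑ k, a k = 1 ∧ ∑ k, a k • v k = x := by
  classical
  have hset : v '' {k | k ≠ i} = ((({i}ᶜ : Finset (Fin 5)).image v : Finset _) : Set _) := by
    rw [Finset.coe_image]
    ext k
    simp
  rw [hset, Finset.mem_convexHull'] at hx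
  obtain ⟨w, hw0, hw1, hwx⟩ := hx
  set a : Fin 5 → ℝ := fun k => if k = i then 0 else w (v k) with ha
  have key : ∀ k ∈ ({i}ᶜ : Finset (Fin 5)), a k = w (v k) := by
    intro k hk
    simp only [Finset.mem_compl, Finset.mem_singleton] at hk
    simp [ha, hk]
  refine ⟨a, fun k => ?_, by simp [ha], ?_, ?_⟩
  · by_cases h : k = i
    · simp [ha, h]
    · simp only [ha, h, if_false]
      exact hw0 _ (Finset.mem_image_of_mem v (by simp [h]))
  · have h1 : ∑ y ∈ ({i}ᶜ : Finset (Fin 5)).image v, w y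
        = ∑ k ∈ ({i}ᶜ : Finset (Fin 5)), w (v k) :=
      Finset.sum_image (fun a _ b _ h => hinj h)
    rw [h1] at hw1
    rw [← Finset.sum_compl_add_sum {i} a, Finset.sum_congr rfl key, hw1]
    simp [ha]
  · have h2 : ∑ y ∈ ({i}ᶜ : Finset (Fin 5)).image v, w y • y
        = ∑ k ∈ ({i}ᶜ : Finset (Fin 5)), w (v k) • v k :=
      Finset.sum_image (fun a _ b _ h => hinj h)
    rw [h2] at hwx
    rw [← Finset.sum_compl_add_sum {i} (fun k => a k • v k),
      Finset.sum_congr rfl (fun k hk => by rw [key k hk]), hwx]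
    simp [ha]

/-- Uniqueness in the classification of linear embeddings of K₅ in general position: at
most one of five points in general position lies inside the tetrahedron spanned by the
other four. -/
theorem K5_inside_vertex_unique
    (v : Fin 5 → EuclideanSpace ℝ (Fin 3))
    (hgp : ∀ i : Fin 5, AffineIndependent ℝ (fun j : {j : Fin 5 // j ≠ i} => v j))
    (i j : Fin 5)
    (hi : v i ∈ interior (convexHull ℝ (v '' {k | k ≠ i})))
    (hj : v j ∈ interior (convexHull ℝ (v '' {k | k ≠ j}))) :
    i = j := by
  classical
  by_contra hne
  have hinj := K5_inj v hgp
  obtain ⟨a, ha0, hai, has, hav⟩ := K5_weights v hinj i (interior_subset hi)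
  obtain ⟨b, hb0, hbj, hbs, hbv⟩ := K5_weights v hinj j (interior_subset hj)
  -- weights for the affine dependence among {k ≠ j}
  set g : Fin 5 → ℝ := fun k => (if k = i then 1 else 0) - a j * b k - a k with hg
  have hgsum : ∑ k : {k : Fin 5 // k ≠ j}, g k = 0 := by
    rw [← Finset.sum_subtype (Finset.univ.filter (· ≠ j)) (fun x => by simp) g]
    have h1 : ∑ k ∈ Finset.univ.filter (· ≠ j), g k = (∑ k, g k) - g j := by
      rw [Finset.filter_ne', Finset.sum_erase_eq_sub (Finset.mem_univ j)]
    rw [h1]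
    have h2 : ∑ k, g k = 1 - a j * 1 - 1 := by
      simp only [hg, Finset.sum_sub_distrib, ← Finset.mul_sum]
      rw [has, hbs]
      simp [Finset.sum_ite_eq' Finset.univ i (fun _ => (1:ℝ))]
    have h3 : g j = 0 - a j * 0 - a j := by simp [hg, Ne.symm hne, hbj]
    rw [h2, h3]; ring
  have hgvec : Finset.univ.weightedVSub (fun k : {k : Fin 5 // k ≠ j} => v k)
      (fun k => g k) = (0 : EuclideanSpace ℝ (Fin 3)) := by
    rw [Finset.weightedVSub_eq_linear_combination _ hgsum]
    rw [← Finset.sum_subtype (Finset.univ.filter (· ≠ j)) (fun x => by simp)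
      (fun k => g k • v k)]
    have h1 : ∑ k ∈ Finset.univ.filter (· ≠ j), g k • v k
        = (∑ k, g k • v k) - g j • v j := by
      rw [Finset.filter_ne', Finset.sum_erase_eq_sub (Finset.mem_univ j)]
    rw [h1]
    have h2 : ∑ k, g k • v k = v i - a j • v j - v i := by
      have e1 : ∑ k, (if k = i then (1:ℝ) else 0) • v k = v i := by
        simp [ite_smul]
      rw [show (fun k => g k • v k)
          = fun k => ((if k = i then (1:ℝ) else 0) • v k - a j • (b k • v k) - a k • v k) from
        funext fun k => by simp [hg, sub_smul, mul_smul]]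
      rw [Finset.sum_sub_distrib, Finset.sum_sub_distrib, ← Finset.smul_sum, hav, hbv, e1]
    have h3 : g j • v j = -(a j • v j) := by
      have : g j = -a j := by simp [hg, Ne.symm hne, hbj]
      rw [this, neg_smul]
    rw [h2, h3]
    abel
  have hzero := (affineIndependent_iff_of_fintype (k := ℝ)
    (p := fun k : {k : Fin 5 // k ≠ j} => v k)).mp (hgp j) (fun k => g k) hgsum hgvec
  have hci := hzero ⟨i, hne⟩
  simp only [hg, if_pos rfl] at hci
  rw [hai] at hci
  norm_num at hci
  -- so a j * b i = 1
  have haj1 : a j ≤ 1 := by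
    rw [← has]
    exact Finset.single_le_sum (f := a) (fun k _ => ha0 k) (Finset.mem_univ j)
  have hbi1 : b i ≤ 1 := by
    rw [← hbs]
    exact Finset.single_le_sum (f := b) (fun k _ => hb0 k) (Finset.mem_univ i)
  have hab : a j * b i = 1 := by linarith
  have hle : a j * b i ≤ a j := mul_le_of_le_one_right (ha0 j) hbi1
  have haj : a j = 1 := by linarith
  -- all other a's are zero
  have hrest : ∀ k ∈ Finset.univ.erase j, a k = 0 := by
    have hs : ∑ k ∈ Finset.univ.erase j, a k = 0 := by
      have := Finset.add_sum_erase Finset.univ a (Finset.mem_univ j)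
      rw [← this, haj] at has
      linarith
    intro k hk
    exact (Finset.sum_eq_zero_iff_of_nonneg (fun k _ => ha0 k)).mp hs k hk
  have hvij : v i = v j := by
    rw [← hav, Finset.sum_eq_single j (fun k _ hk => by
      rw [hrest k (Finset.mem_erase.mpr ⟨hk, Finset.mem_univ k⟩), zero_smul])
      (fun h => absurd (Finset.mem_univ j) h), haj, one_smul]
  exact hne (hinj hvij)
end

section
/- Let p1, p2, p3 be affinely independent points of ℝ³ and let a, b ∈ ℝ³ with a not lying in the plane through p1, p2, p3 (i.e. a ∉ affineSpan ℝ {p1,p2,p3}). If the open segment from a to b meets the intrinsic interior of the triangle convexHull ℝ {p1, p2, p3}, then a and b lie strictly on opposite sides of the plane through p1, p2, p3, i.e. (affineSpan ℝ {p1,p2,p3}).SOppSide a b. -/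
section

variable {R V : Type*} [Field R] [LinearOrder R] [IsStrictOrderedRing R]
  [AddCommGroup V] [Module R V]

theorem sbtw_of_mem_openSegment {a b x : V} (hab : a ≠ b) (hx : x ∈ openSegment R a b) :
    Sbtw R a x b :=
  ⟨mem_segment_iff_wbtw.1 (openSegment_subset_segment R a b hx),
    fun hxa => hab (left_mem_openSegment_iff.1 (hxa ▸ hx)),
    fun hxb => hab (right_mem_openSegment_iff.1 (hxb ▸ hx))⟩

theorem AffineSubspace.sOppSide_of_mem_openSegment {s : AffineSubspace R V} {a b x : V}
    (hx : x ∈ openSegment R a b) (hxs : x ∈ s) (ha : a ∉ s) : s.SOppSide a b := by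
  have hab : a ≠ b := by
    rintro rfl
    rw [openSegment_same, Set.mem_singleton_iff] at hx
    exact ha (hx ▸ hxs)
  exact (sbtw_of_mem_openSegment hab hx).sOppSide_of_notMem_of_mem ha hxs

end

theorem sOppSide_of_openSegment_inter_intrinsicInterior_general
    (p₁ p₂ p₃ a b : EuclideanSpace ℝ (Fin 3))
    (ha : a ∉ affineSpan ℝ ({p₁, p₂, p₃} : Set (EuclideanSpace ℝ (Fin 3))))
    (hmeet : (openSegment ℝ a b ∩
      intrinsicInterior ℝ (convexHull ℝ ({p₁, p₂, p₃} : Set (EuclideanSpace ℝ (Fin 3))))) ≠ ∅) :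
    (affineSpan ℝ ({p₁, p₂, p₃} : Set (EuclideanSpace ℝ (Fin 3)))).SOppSide a b := by
  obtain ⟨x, hx, hx_int⟩ := Set.nonempty_iff_ne_empty.2 hmeet
  exact AffineSubspace.sOppSide_of_mem_openSegment hx
    (convexHull_subset_affineSpan _ (intrinsicInterior_subset hx_int)) ha

/-- The basic piercing fact: if the open segment from `a` to `b` meets the relative
interior of the triangle on three affinely independent points `p₁, p₂, p₃` of ℝ³, and `a`
does not lie in the plane through `p₁, p₂, p₃`, then `a` and `b` lie strictly on opposite
sides of that plane. -/
theorem sOppSide_of_openSegment_inter_intrinsicInterior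
    (p₁ p₂ p₃ a b : EuclideanSpace ℝ (Fin 3))
    (h : AffineIndependent ℝ ![p₁, p₂, p₃])
    (ha : a ∉ affineSpan ℝ ({p₁, p₂, p₃} : Set (EuclideanSpace ℝ (Fin 3))))
    (hmeet : (openSegment ℝ a b ∩
      intrinsicInterior ℝ (convexHull ℝ ({p₁, p₂, p₃} : Set (EuclideanSpace ℝ (Fin 3))))) ≠ ∅) :
    (affineSpan ℝ ({p₁, p₂, p₃} : Set (EuclideanSpace ℝ (Fin 3)))).SOppSide a b :=
  sOppSide_of_openSegment_inter_intrinsicInterior_general p₁ p₂ p₃ a b ha hmeet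
end
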